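/- Let V ⊂ ℝ² be a finite set of 7 points whose compressed Vandermonde matrix W_{B} on the monomial basis B = {1, x, y, x², xy, y², x³} is invertible. Let q_8, q_9, q_{10} be cubic polynomials vanishing on V with leading monomials x²y, xy², y³ respectively, and let s be the unique quartic x⁴ − (linear combination of monomials in B) vanishing on V. Then every polynomial p of degree ≤ 6 vanishing identically on V can be written as p = A q_8 + B q_9 + C q_{10} + D s, with deg A, deg B, deg C ≤ 3 and deg D ≤ 2. -/
import Mathlib


open MvPolynomial

/-- The exponent Finsupp of the monomial `x^i y^j`. -/
noncomputable def mIdx (i j : ℕ) : Fin 2 →₀ ℕ := Finsupp.single 0 i + Finsupp.single 1 j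

/-- The monomial `x^i y^j` as a bivariate real polynomial. -/
noncomputable def mono (i j : ℕ) : MvPolynomial (Fin 2) ℝ := monomial (mIdx i j) 1

/-- Evaluation of a bivariate polynomial at a point of `ℝ²`. -/
noncomputable def evalAt (z : ℝ × ℝ) (p : MvPolynomial (Fin 2) ℝ) : ℝ := eval ![z.1, z.2] p

/-- Graded lexicographic order (with `x > y`) on exponent pairs. -/
def glexLt (a b : ℕ × ℕ) : Prop :=
  a.1 + a.2 < b.1 + b.2 ∨ (a.1 + a.2 = b.1 + b.2 ∧ a.1 < b.1)

/-- `q` has leading monomial `x^i y^j` (with coefficient 1) in graded lex order `x > y`. -/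
def HasLeading (q : MvPolynomial (Fin 2) ℝ) (i j : ℕ) : Prop :=
  q.coeff (mIdx i j) = 1 ∧ ∀ d ∈ q.support, d ≠ mIdx i j → glexLt (d 0, d 1) (i, j)

/-- The basis of monomials `{1, x, y, x², xy, y², x³}`. -/
def bas7 : Fin 7 → ℕ × ℕ := ![(0,0),(1,0),(0,1),(2,0),(1,1),(0,2),(3,0)]

/-- The compressed Vandermonde matrix of seven points on the basis `bas7`. -/
def W7 (pts : Fin 7 → ℝ × ℝ) : Matrix (Fin 7) (Fin 7) ℝ :=
  Matrix.of fun k m => (pts k).1 ^ (bas7 m).1 * (pts k).2 ^ (bas7 m).2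


section Aux

lemma mIdx_apply0 (i j : ℕ) : (mIdx i j) 0 = i := by simp [mIdx]
lemma mIdx_apply1 (i j : ℕ) : (mIdx i j) 1 = j := by simp [mIdx]

lemma finsupp_eq (e : Fin 2 →₀ ℕ) : e = mIdx (e 0) (e 1) := by
  ext a; fin_cases a <;> simp [mIdx]

lemma mIdx_add (c d a b : ℕ) : mIdx c d + mIdx a b = mIdx (c+a) (d+b) := by
  simp [mIdx, Finsupp.single_add]; abel

lemma mono_mul (c d a b : ℕ) : mono c d * mono a b = mono (c+a) (d+b) := by
  simp [mono, monomial_mul, mIdx_add]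

lemma sum_eq (e : Fin 2 →₀ ℕ) : (e.sum fun _ n => n) = e 0 + e 1 := by
  rw [Finsupp.sum_fintype _ _ (fun _ => rfl)]; exact Fin.sum_univ_two _

lemma totalDegree_mono (i j : ℕ) : (mono i j).totalDegree = i + j := by
  rw [mono, totalDegree_monomial _ (one_ne_zero)]
  rw [sum_eq, mIdx_apply0, mIdx_apply1]

lemma supp_deg {p : MvPolynomial (Fin 2) ℝ} {e : Fin 2 →₀ ℕ} (h : e ∈ p.support) :
    e 0 + e 1 ≤ p.totalDegree := by
  have := le_totalDegree h; rwa [sum_eq] at this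

lemma evalAt_mono (z : ℝ × ℝ) (i j : ℕ) : evalAt z (mono i j) = z.1^i * z.2^j := by
  simp [evalAt, mono, eval_monomial, mIdx, Finsupp.prod_add_index,
    Finsupp.prod_single_index, pow_add]

noncomputable def Msub (q8 q9 q10 s : MvPolynomial (Fin 2) ℝ) :
    Submodule ℝ (MvPolynomial (Fin 2) ℝ) :=
  (restrictTotalDegree (Fin 2) ℝ 3).map (LinearMap.mulRight ℝ q8) ⊔
  (restrictTotalDegree (Fin 2) ℝ 3).map (LinearMap.mulRight ℝ q9) ⊔
  (restrictTotalDegree (Fin 2) ℝ 3).map (LinearMap.mulRight ℝ q10) ⊔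
  (restrictTotalDegree (Fin 2) ℝ 2).map (LinearMap.mulRight ℝ s) ⊔
  Submodule.span ℝ (Set.range fun m : Fin 7 => mono (bas7 m).1 (bas7 m).2)

variable {q8 q9 q10 s : MvPolynomial (Fin 2) ℝ}

lemma mem_bas (q8 q9 q10 s : MvPolynomial (Fin 2) ℝ) (m : Fin 7) :
    mono (bas7 m).1 (bas7 m).2 ∈ Msub q8 q9 q10 s :=
  Submodule.mem_sup_right (Submodule.subset_span ⟨m, rfl⟩)

lemma mem_q8 {A : MvPolynomial (Fin 2) ℝ} (h : A.totalDegree ≤ 3) :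
    A * q8 ∈ Msub q8 q9 q10 s := by
  exact Submodule.mem_sup_left (Submodule.mem_sup_left (Submodule.mem_sup_left
    (Submodule.mem_sup_left ⟨A, (mem_restrictTotalDegree _ _ _).2 h, rfl⟩)))

lemma mem_q9 {A : MvPolynomial (Fin 2) ℝ} (h : A.totalDegree ≤ 3) :
    A * q9 ∈ Msub q8 q9 q10 s := by
  exact Submodule.mem_sup_left (Submodule.mem_sup_left (Submodule.mem_sup_left
    (Submodule.mem_sup_right ⟨A, (mem_restrictTotalDegree _ _ _).2 h, rfl⟩)))

lemma mem_q10 {A : MvPolynomial (Fin 2) ℝ} (h : A.totalDegree ≤ 3) :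
    A * q10 ∈ Msub q8 q9 q10 s := by
  exact Submodule.mem_sup_left (Submodule.mem_sup_left
    (Submodule.mem_sup_right ⟨A, (mem_restrictTotalDegree _ _ _).2 h, rfl⟩))

lemma mem_s {A : MvPolynomial (Fin 2) ℝ} (h : A.totalDegree ≤ 2) :
    A * s ∈ Msub q8 q9 q10 s := by
  exact Submodule.mem_sup_left
    (Submodule.mem_sup_right ⟨A, (mem_restrictTotalDegree _ _ _).2 h, rfl⟩)

lemma mul_mono_mem {M : Submodule ℝ (MvPolynomial (Fin 2) ℝ)} (c d : ℕ)
    (t : MvPolynomial (Fin 2) ℝ)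
    (h : ∀ e ∈ t.support, mono (c + e 0) (d + e 1) ∈ M) : mono c d * t ∈ M := by
  have key : mono c d * t = ∑ e ∈ t.support, (coeff e t) • mono (c + e 0) (d + e 1) := by
    conv_lhs => rw [t.as_sum, Finset.mul_sum]
    apply Finset.sum_congr rfl
    intro e _
    rw [mono, mono, monomial_mul, smul_monomial, one_mul, smul_eq_mul, mul_one]
    congr 1
    have : mIdx c d + e = mIdx c d + mIdx (e 0) (e 1) := by
      conv_lhs => rw [finsupp_eq e]
    rw [this, mIdx_add]
  rw [key]
  exact Submodule.sum_mem _ fun e he => Submodule.smul_mem _ _ (h e he)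

lemma tail_supp {q : MvPolynomial (Fin 2) ℝ} {a b : ℕ} (h1 : q.coeff (mIdx a b) = 1)
    {e : Fin 2 →₀ ℕ} (he : e ∈ (q - mono a b).support) :
    e ∈ q.support ∧ e ≠ mIdx a b := by
  have hc : coeff e (q - mono a b) ≠ 0 := mem_support_iff.1 he
  rw [coeff_sub, mono, coeff_monomial] at hc
  by_cases hE : e = mIdx a b
  · exfalso; apply hc; rw [if_pos hE.symm, hE, h1]; ring
  · rw [if_neg (Ne.symm hE), sub_zero] at hc
    exact ⟨mem_support_iff.2 hc, hE⟩

lemma red_gen {M : Submodule ℝ (MvPolynomial (Fin 2) ℝ)} {q : MvPolynomial (Fin 2) ℝ}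
    {a b : ℕ} (h1 : q.coeff (mIdx a b) = 1) (c d : ℕ)
    (hmain : mono c d * q ∈ M)
    (htail : ∀ e ∈ (q - mono a b).support, mono (c + e 0) (d + e 1) ∈ M) :
    mono (c+a) (d+b) ∈ M := by
  have hkey : mono (c+a) (d+b) = mono c d * q - mono c d * (q - mono a b) := by
    rw [mul_sub, mono_mul]; ring
  rw [hkey]
  exact sub_mem hmain (mul_mono_mem c d _ htail)

lemma mono_mem_Msub
    (hd8 : q8.totalDegree ≤ 3) (hl8 : HasLeading q8 2 1)
    (hd9 : q9.totalDegree ≤ 3) (hl9 : HasLeading q9 1 2)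
    (hd10 : q10.totalDegree ≤ 3) (hl10 : HasLeading q10 0 3)
    (hs1 : s.coeff (mIdx 4 0) = 1)
    (hs2 : ∀ d ∈ s.support, d ≠ mIdx 4 0 →
      (d 0, d 1) ∈ ({(0,0),(1,0),(0,1),(2,0),(1,1),(0,2),(3,0)} : Set (ℕ × ℕ))) :
    ∀ N i j : ℕ, i + j ≤ 6 → 7*(i+j)+i ≤ N → mono i j ∈ Msub q8 q9 q10 s := by
  intro N
  induction N with
  | zero =>
    intro i j _ hN
    obtain ⟨rfl, rfl⟩ : i = 0 ∧ j = 0 := by omega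
    simpa [bas7] using mem_bas q8 q9 q10 s 0
  | succ N ih =>
    intro i j h6 hN
    match j, i with
    | 0, 0 => simpa [bas7] using mem_bas q8 q9 q10 s 0
    | 0, 1 => simpa [bas7] using mem_bas q8 q9 q10 s 1
    | 0, 2 => simpa [bas7] using mem_bas q8 q9 q10 s 3
    | 0, 3 => simpa [bas7] using mem_bas q8 q9 q10 s 6
    | 0, (i+4) =>
      show mono (i+4) (0+0) ∈ _
      apply red_gen hs1
      · exact mem_s (by rw [totalDegree_mono]; omega)
      · intro e he
        obtain ⟨hqs, hne⟩ := tail_supp hs1 he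
        have hmem := hs2 e hqs hne
        have hb : e 0 ≤ 3 ∧ e 0 + e 1 ≤ 3 := by
          simp only [Set.mem_insert_iff, Set.mem_singleton_iff, Prod.mk.injEq] at hmem
          rcases hmem with ⟨h1,h2⟩|⟨h1,h2⟩|⟨h1,h2⟩|⟨h1,h2⟩|⟨h1,h2⟩|⟨h1,h2⟩|⟨h1,h2⟩ <;> omega
        exact ih (i + e 0) (0 + e 1) (by omega) (by omega)
    | 1, 0 => simpa [bas7] using mem_bas q8 q9 q10 s 2
    | 1, 1 => simpa [bas7] using mem_bas q8 q9 q10 s 4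
    | 1, (i+2) =>
      show mono (i+2) (0+1) ∈ _
      apply red_gen hl8.1
      · exact mem_q8 (by rw [totalDegree_mono]; omega)
      · intro e he
        obtain ⟨hqs, hne⟩ := tail_supp hl8.1 he
        have hg : e 0 + e 1 < 3 ∨ (e 0 + e 1 = 3 ∧ e 0 < 2) := hl8.2 e hqs hne
        have hdeg : e 0 + e 1 ≤ 3 := (supp_deg hqs).trans hd8
        exact ih (i + e 0) (0 + e 1) (by omega) (by omega)
    | 2, 0 => simpa [bas7] using mem_bas q8 q9 q10 s 5
    | 2, (i+1) =>
      show mono (i+1) (0+2) ∈ _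
      apply red_gen hl9.1
      · exact mem_q9 (by rw [totalDegree_mono]; omega)
      · intro e he
        obtain ⟨hqs, hne⟩ := tail_supp hl9.1 he
        have hg : e 0 + e 1 < 3 ∨ (e 0 + e 1 = 3 ∧ e 0 < 1) := hl9.2 e hqs hne
        have hdeg : e 0 + e 1 ≤ 3 := (supp_deg hqs).trans hd9
        exact ih (i + e 0) (0 + e 1) (by omega) (by omega)
    | (j+3), i =>
      show mono (i+0) (j+3) ∈ _
      apply red_gen hl10.1
      · exact mem_q10 (by rw [totalDegree_mono]; omega)
      · intro e he
        obtain ⟨hqs, hne⟩ := tail_supp hl10.1 he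
        have hg : e 0 + e 1 < 3 ∨ (e 0 + e 1 = 3 ∧ e 0 < 0) := hl10.2 e hqs hne
        have hdeg : e 0 + e 1 ≤ 3 := (supp_deg hqs).trans hd10
        exact ih (i + e 0) (j + e 1) (by omega) (by omega)

end Aux

open Matrix

/-- every polynomial of degree ≤ 6 vanishing on the seven points can be
written as `A q₈ + B q₉ + C q₁₀ + D s`. -/
theorem representation_rank7_case1 (pts : Fin 7 → ℝ × ℝ) (hdist : Function.Injective pts)
    (hW : IsUnit (W7 pts).det)
    (q8 q9 q10 s : MvPolynomial (Fin 2) ℝ)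
    (hd8 : q8.totalDegree ≤ 3) (hl8 : HasLeading q8 2 1) (hv8 : ∀ k, evalAt (pts k) q8 = 0)
    (hd9 : q9.totalDegree ≤ 3) (hl9 : HasLeading q9 1 2) (hv9 : ∀ k, evalAt (pts k) q9 = 0)
    (hd10 : q10.totalDegree ≤ 3) (hl10 : HasLeading q10 0 3)
    (hv10 : ∀ k, evalAt (pts k) q10 = 0)
    (hs1 : s.coeff (mIdx 4 0) = 1)
    (hs2 : ∀ d ∈ s.support, d ≠ mIdx 4 0 →
      (d 0, d 1) ∈ ({(0,0),(1,0),(0,1),(2,0),(1,1),(0,2),(3,0)} : Set (ℕ × ℕ)))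
    (hvs : ∀ k, evalAt (pts k) s = 0) :
    ∀ p : MvPolynomial (Fin 2) ℝ, p.totalDegree ≤ 6 → (∀ k, evalAt (pts k) p = 0) →
      ∃ A B C D : MvPolynomial (Fin 2) ℝ,
        A.totalDegree ≤ 3 ∧ B.totalDegree ≤ 3 ∧ C.totalDegree ≤ 3 ∧ D.totalDegree ≤ 2 ∧
        p = A * q8 + B * q9 + C * q10 + D * s := by
  intro p hp hvp
  -- Step 1: p ∈ Msub
  have hpM : p ∈ Msub q8 q9 q10 s := by
    nth_rewrite 1 [p.as_sum]
    apply Submodule.sum_mem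
    intro e he
    have hdeg : e 0 + e 1 ≤ 6 := (supp_deg he).trans hp
    have hmem := mono_mem_Msub hd8 hl8 hd9 hl9 hd10 hl10 hs1 hs2 48 (e 0) (e 1) hdeg (by omega)
    have : monomial e (coeff e p) = (coeff e p) • mono (e 0) (e 1) := by
      rw [mono, smul_monomial, smul_eq_mul, mul_one, ← finsupp_eq e]
    rw [this]
    exact Submodule.smul_mem _ _ hmem
  -- Step 2: decompose
  rw [Msub] at hpM
  obtain ⟨u, hu, r, hr, hur⟩ := Submodule.mem_sup.1 hpM
  obtain ⟨u1, hu1, ds, hds, h1⟩ := Submodule.mem_sup.1 hu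
  obtain ⟨u2, hu2, cq, hcq, h2⟩ := Submodule.mem_sup.1 hu1
  obtain ⟨aq, haq, bq, hbq, h3⟩ := Submodule.mem_sup.1 hu2
  obtain ⟨A, hA, rfl⟩ := haq
  obtain ⟨B, hB, rfl⟩ := hbq
  obtain ⟨C, hC, rfl⟩ := hcq
  obtain ⟨D, hD, rfl⟩ := hds
  simp only [SetLike.mem_coe, mem_restrictTotalDegree] at hA hB hC hD
  simp only [LinearMap.mulRight_apply] at h1 h2 h3 hur
  -- Step 3: r vanishes at the points
  obtain ⟨c, hc⟩ := (Submodule.mem_span_range_iff_exists_fun ℝ).1 hr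
  have hrv : ∀ k, evalAt (pts k) r = 0 := by
    intro k
    have heq : evalAt (pts k) p = evalAt (pts k) (A*q8) + evalAt (pts k) (B*q9)
        + evalAt (pts k) (C*q10) + evalAt (pts k) (D*s) + evalAt (pts k) r := by
      rw [← hur, ← h1, ← h2, ← h3]; simp [evalAt]
    have e8 : evalAt (pts k) (A*q8) = 0 := by
      simp only [evalAt, _root_.map_mul]; rw [show eval ![(pts k).1,(pts k).2] q8 = 0 from hv8 k]; ring
    have e9 : evalAt (pts k) (B*q9) = 0 := by
      simp only [evalAt, _root_.map_mul]; rw [show eval ![(pts k).1,(pts k).2] q9 = 0 from hv9 k]; ring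
    have e10 : evalAt (pts k) (C*q10) = 0 := by
      simp only [evalAt, _root_.map_mul]; rw [show eval ![(pts k).1,(pts k).2] q10 = 0 from hv10 k]; ring
    have es : evalAt (pts k) (D*s) = 0 := by
      simp only [evalAt, _root_.map_mul]; rw [show eval ![(pts k).1,(pts k).2] s = 0 from hvs k]; ring
    rw [hvp k, e8, e9, e10, es] at heq
    linarith
  -- Step 4: r = 0
  have hWc : W7 pts *ᵥ c = 0 := by
    funext k
    have hr0 := hrv k
    rw [← hc] at hr0
    simp only [map_sum, evalAt] at hr0
    have : ∀ m : Fin 7, eval ![(pts k).1,(pts k).2] (c m • mono (bas7 m).1 (bas7 m).2)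
        = W7 pts k m * c m := by
      intro m
      rw [smul_eq_C_mul, _root_.map_mul, eval_C]
      have := evalAt_mono (pts k) (bas7 m).1 (bas7 m).2
      rw [evalAt] at this
      rw [this, W7]
      simp only [Matrix.of_apply]
      ring
    rw [Finset.sum_congr rfl (fun m _ => this m)] at hr0
    simpa [Matrix.mulVec, dotProduct] using hr0
  have hc0 : c = 0 := by
    have h2 := congrArg (fun v => (W7 pts)⁻¹ *ᵥ v) hWc
    simpa [Matrix.mulVec_mulVec, Matrix.nonsing_inv_mul _ hW, Matrix.mulVec_zero,
      Matrix.one_mulVec] using h2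
  have hr0 : r = 0 := by
    rw [← hc, hc0]; simp
  refine ⟨A, B, C, D, hA, hB, hC, hD, ?_⟩
  rw [← hur, hr0, ← h1, ← h2, ← h3]
  ring
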